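/- arXiv:2506.18782 — 2 statements merged into one kernel-verified Lean document; each statement's English description precedes it below -/
import Mathlib

section
/- Let r be a positive even integer with 2r ≤ n. Then any triangle-free subset S of the r-distance graph of the n-dimensional hypercube satisfies |S| ≤ 2 · (Σ_{i=0}^{r/2} C(n, i)) + 4r · 2^n / (n + 1), where C(a,b) denotes the binomial coefficient. -/
/-!
Split the `n` coordinates into `⌊n / h⌋` disjoint blocks of size `h = r / 2`. For every vertex
`y`, the vertices obtained from `y` by flipping a single block are pairwise at distance `r`, so a
triangle-free `S` contains at most two of them. Each block flip is a bijection of the cube, so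
double counting the pairs `(y, block)` whose flip lands in `S` gives `⌊n / h⌋ · |S| ≤ 2 · 2ⁿ`,
and `2r ≤ n` makes `2r · ⌊n / h⌋ > n`.
-/

open Finset Function
open scoped symmDiff

def IsTriangleFreeAt {ι β : Type*} [Fintype ι] [DecidableEq β] (d : ℕ) (S : Finset (ι → β)) :
    Prop :=
  ∀ u ∈ S, ∀ v ∈ S, ∀ w ∈ S, u ≠ v → u ≠ w → v ≠ w →
    ¬(hammingDist u v = d ∧ hammingDist u w = d ∧ hammingDist v w = d)

theorem IsTriangleFreeAt.card_filter_mem_le_two {ι β κ : Type*} [Fintype ι] [DecidableEq β]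
    [Fintype κ] {d : ℕ} {S : Finset (ι → β)} (hS : IsTriangleFreeAt d S) (hd : 0 < d)
    {x : κ → ι → β} (hx : Pairwise fun i j => hammingDist (x i) (x j) = d) :
    #{i | x i ∈ S} ≤ 2 := by
  have hne : Pairwise fun i j => x i ≠ x j := fun i j hij heq => by
    simpa [heq, hd.ne] using hx hij
  by_contra! h
  obtain ⟨a, ha, b, hb, c, hc, hab, hac, hbc⟩ := two_lt_card.mp h
  simp only [mem_filter_univ] at ha hb hc
  exact hS _ ha _ hb _ hc (hne hab) (hne hac) (hne hbc) ⟨hx hab, hx hac, hx hbc⟩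

theorem card_mul_card_le_of_bijective {κ α : Type*} [Fintype κ] [Fintype α] [DecidableEq α]
    {f : κ → α → α} (hf : ∀ i, Bijective (f i)) {S : Finset α} {k : ℕ}
    (hk : ∀ y, #{i | f i y ∈ S} ≤ k) : Fintype.card κ * #S ≤ Fintype.card α * k := by
  refine card_mul_le_card_mul (fun i y => f i y ∈ S) (fun i _ => ?_) (fun y _ => hk y)
  refine card_le_card_of_surjOn (f i) fun s hs => ?_
  obtain ⟨y, rfl⟩ := (hf i).surjective s
  exact ⟨y, by simpa [bipartiteAbove] using hs, rfl⟩

theorem exists_pairwise_disjoint_card_eq {α : Type*} [Fintype α] [DecidableEq α] {m h : ℕ}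
    (hmh : m * h ≤ Fintype.card α) :
    ∃ B : Fin m → Finset α, (∀ i, #(B i) = h) ∧ Pairwise (Disjoint on B) := by
  obtain ⟨e⟩ : Nonempty (Fin m × Fin h ↪ α) := Embedding.nonempty_of_card_le (by simpa)
  refine ⟨fun i => (({i} : Finset (Fin m)) ×ˢ univ).map e, fun i => by simp, ?_⟩
  intro i j hij
  simp only [onFun, disjoint_map, disjoint_product, disjoint_singleton, ne_eq, hij,
    not_false_eq_true, true_or]

section flip

variable {ι : Type*} [DecidableEq ι]

def flipOn (B : Finset ι) (y : ι → Bool) : ι → Bool := fun c => if c ∈ B then !y c else y c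

theorem flipOn_involutive (B : Finset ι) : Involutive (flipOn B) := fun y => by
  ext c; by_cases hc : c ∈ B <;> simp [flipOn, hc]

theorem hammingDist_flipOn_flipOn [Fintype ι] (A B : Finset ι) (y : ι → Bool) :
    hammingDist (flipOn A y) (flipOn B y) = #(A ∆ B) := by
  rw [hammingDist]
  congr 1
  ext c
  rw [mem_filter]
  by_cases hA : c ∈ A <;> by_cases hB : c ∈ B <;> simp [flipOn, mem_symmDiff, hA, hB]

end flip

theorem lt_four_mul_div_mul {n h : ℕ} (hh : 0 < h) (hn : 4 * h ≤ n) : n < 4 * (n / h * h) := by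
  have := Nat.lt_div_mul_add (a := n) hh
  omega

theorem IsTriangleFreeAt.card_div_mul_card_le {ι : Type*} [Fintype ι] [DecidableEq ι] {h : ℕ}
    {S : Finset (ι → Bool)} (hS : IsTriangleFreeAt (h + h) S) :
    Fintype.card ι / h * #S ≤ 2 ^ Fintype.card ι * 2 := by
  rcases Nat.eq_zero_or_pos h with rfl | hh
  · simp
  obtain ⟨B, hBcard, hBdisj⟩ :=
    exists_pairwise_disjoint_card_eq (Nat.div_mul_le_self (Fintype.card ι) h)
  have hclique (y : ι → Bool) :
      Pairwise fun i j => hammingDist (flipOn (B i) y) (flipOn (B j) y) = h + h := fun i j hij => by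
    dsimp only
    rw [hammingDist_flipOn_flipOn, symmDiff_eq_union (hBdisj hij),
      card_union_of_disjoint (hBdisj hij), hBcard, hBcard]
  simpa using card_mul_card_le_of_bijective (fun i => (flipOn_involutive (B i)).bijective)
    fun y => hS.card_filter_mem_le_two (by omega) (hclique y)

/-- when `2r ≤ n` (`r` positive and even), every triangle-free subset `S`
of the `r`-distance graph of the hypercube satisfies
`|S| ≤ 2 · (Σ_{i=0}^{r/2} C(n,i)) + 4r · 2^n / (n+1)`. -/
theorem triangle_free_r_distance_upper_bound
    (n r : ℕ) (hr : 0 < r) (hre : Even r) (hrn : 2 * r ≤ n)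
    (S : Finset (Fin n → Bool))
    (htf : ∀ u ∈ S, ∀ v ∈ S, ∀ w ∈ S, u ≠ v → u ≠ w → v ≠ w →
      ¬(hammingDist u v = r ∧ hammingDist u w = r ∧ hammingDist v w = r)) :
    (S.card : ℝ) ≤ 2 * (∑ i ∈ Finset.range (r / 2 + 1), (n.choose i : ℝ))
      + 4 * r * 2 ^ n / (n + 1) := by
  obtain ⟨h, rfl⟩ := hre
  have hcount : n / h * #S ≤ 2 ^ n * 2 := by
    simpa using IsTriangleFreeAt.card_div_mul_card_le (ι := Fin n) htf
  have hblocks : n < 4 * (n / h * h) := lt_four_mul_div_mul (by omega) (by omega)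
  have hnat : (n + 1) * #S ≤ 4 * (h + h) * 2 ^ n := by nlinarith
  have hcard : (#S : ℝ) ≤ 4 * ↑(h + h) * 2 ^ n / (n + 1) := by
    rw [le_div_iff₀ (by positivity)]
    exact_mod_cast (mul_comm _ _).trans_le hnat
  have hsum_nonneg : (0 : ℝ) ≤ ∑ i ∈ range ((h + h) / 2 + 1), (n.choose i : ℝ) := by positivity
  linarith
end

section
/- Let n ≥ 2 and let r be a positive even integer. Let S be the set of vertices of the n-dimensional hypercube having exactly r/2 coordinates equal to 1, at least one of which is in the first or second coordinate. Then S is triangle-free in the r-distance graph (no three distinct vertices of S are pairwise at Hamming distance exactly r), and |S| = C(n, r/2) − C(n−2, r/2), where C(a,b) denotes the binomial coefficient. -/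
/-!
Two vertices with `k` ones each are at Hamming distance `2k - 2|A ∩ B|`, where `A`, `B` are their
sets of ones; so distance `r = 2k` forces disjoint supports. Three vertices of `S` each have a one
among the first two coordinates, so two of them share a one and cannot be at distance `r`. The
vertices of weight `k` missing `S` are those whose ones avoid the first two coordinates, and there
are `C(n - 2, k)` of them.
-/

open Finset

section

variable {ι : Type*} [Fintype ι]

def ones (v : ι → Bool) : Finset ι := {i | v i = true}

@[simp] lemma mem_ones {v : ι → Bool} {i : ι} : i ∈ ones v ↔ v i = true := by
  simp [ones]

lemma hammingDist_add_two_mul_card_inter_ones [DecidableEq ι] (u v : ι → Bool) :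
    hammingDist u v + 2 * #(ones u ∩ ones v) = #(ones u) + #(ones v) := by
  simp only [hammingDist, ones, ← filter_and, card_filter, mul_sum, ← sum_add_distrib]
  refine sum_congr rfl fun i _ => ?_
  cases u i <;> cases v i <;> rfl

lemma disjoint_ones_of_hammingDist_eq_two_mul [DecidableEq ι] {u v : ι → Bool} {k : ℕ}
    (hu : #(ones u) = k) (hv : #(ones v) = k) (h : hammingDist u v = 2 * k) :
    Disjoint (ones u) (ones v) := by
  have := hammingDist_add_two_mul_card_inter_ones u v
  rw [disjoint_iff_inter_eq_empty, ← card_eq_zero]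
  omega

lemma card_filter_ones_subset_and_card_eq [DecidableEq ι] (T : Finset ι) (k : ℕ) :
    #{v : ι → Bool | ones v ⊆ T ∧ #(ones v) = k} = (#T).choose k := by
  rw [← card_powersetCard]
  refine card_nbij' ones (fun s i => decide (i ∈ s)) ?_ ?_ ?_ ?_
  · intro v hv
    simpa using hv
  · intro s hs
    have hones : ones (fun i => decide (i ∈ s)) = s := by ext; simp
    simpa [hones] using hs
  · intro v _
    funext i
    simp
  · intro s _
    ext
    simp

lemma card_filter_card_ones_eq_and_not_subset [DecidableEq ι] (T : Finset ι) (k : ℕ) :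
    #{v : ι → Bool | #(ones v) = k ∧ ¬ ones v ⊆ T} =
      (Fintype.card ι).choose k - (#T).choose k := by
  have hlevel := card_filter_ones_subset_and_card_eq (univ : Finset ι) k
  have hsplit := card_filter_add_card_filter_not (s := {v : ι → Bool | #(ones v) = k})
    (fun v => ones v ⊆ T)
  simp only [subset_univ, true_and, card_univ] at hlevel
  simp only [filter_filter] at hsplit
  rw [← card_filter_ones_subset_and_card_eq T k, ← hlevel, ← hsplit]
  simp only [and_comm]
  omega

end

/-- the set of level-`r/2` vertices of the hypercube having a `1` in the
first or second coordinate is triangle-free in the `r`-distance graph and has exactly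
`C(n, r/2) - C(n-2, r/2)` elements. -/
theorem first_two_coordinates_construction
    (n r : ℕ) (hn : 2 ≤ n) (hre : Even r) :
    (∀ u ∈ Finset.univ.filter (fun v : Fin n → Bool =>
        (Finset.univ.filter (fun i : Fin n => v i = true)).card = r / 2 ∧
        (v ⟨0, by omega⟩ = true ∨ v ⟨1, by omega⟩ = true)),
     ∀ v ∈ Finset.univ.filter (fun v : Fin n → Bool =>
        (Finset.univ.filter (fun i : Fin n => v i = true)).card = r / 2 ∧
        (v ⟨0, by omega⟩ = true ∨ v ⟨1, by omega⟩ = true)),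
     ∀ w ∈ Finset.univ.filter (fun v : Fin n → Bool =>
        (Finset.univ.filter (fun i : Fin n => v i = true)).card = r / 2 ∧
        (v ⟨0, by omega⟩ = true ∨ v ⟨1, by omega⟩ = true)),
      u ≠ v → u ≠ w → v ≠ w →
      ¬(hammingDist u v = r ∧ hammingDist u w = r ∧ hammingDist v w = r)) ∧
    (Finset.univ.filter (fun v : Fin n → Bool =>
        (Finset.univ.filter (fun i : Fin n => v i = true)).card = r / 2 ∧
        (v ⟨0, by omega⟩ = true ∨ v ⟨1, by omega⟩ = true))).card
      = n.choose (r / 2) - (n - 2).choose (r / 2) := by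
  set a : Fin n := ⟨0, by omega⟩
  set b : Fin n := ⟨1, by omega⟩
  have hr : r = 2 * (r / 2) := by obtain ⟨m, rfl⟩ := hre; omega
  constructor
  · intro u hu v hv w hw _ _ _ ⟨duv, duw, dvw⟩
    simp only [mem_filter, mem_univ, true_and] at hu hv hw
    have huv := disjoint_ones_of_hammingDist_eq_two_mul hu.1 hv.1 (hr ▸ duv)
    have huw := disjoint_ones_of_hammingDist_eq_two_mul hu.1 hw.1 (hr ▸ duw)
    have hvw := disjoint_ones_of_hammingDist_eq_two_mul hv.1 hw.1 (hr ▸ dvw)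
    simp only [disjoint_left, mem_ones] at huv huw hvw
    -- pigeonhole: two of `u, v, w` share a one at `a` or at `b`
    grind
  · have hcount := card_filter_card_ones_eq_and_not_subset ({a, b}ᶜ : Finset (Fin n)) (r / 2)
    rw [Fintype.card_fin, card_compl, Fintype.card_fin, card_pair (by simp [a, b])] at hcount
    rw [← hcount]
    congr 1
    ext v
    simp only [mem_filter, mem_univ, true_and, subset_iff, mem_compl, mem_insert, mem_singleton,
      mem_ones, not_forall, not_not, exists_prop]
    grind [ones]
end
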